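/- arXiv:2011.10320 — 3 statements merged into one kernel-verified Lean document; each statement's English description precedes it below -/
import Mathlib

section
/- Strong shift equivalence implies shift equivalence: if A and B are strong shift equivalent (related by a finite chain of elementary shift relations), then A and B are shift equivalent. -/
/-- Elementary shift relation: `A = R * S` and `B = S * R`. -/
def ElemSE {n m : ℕ} (A : Matrix (Fin n) (Fin n) ℕ) (B : Matrix (Fin m) (Fin m) ℕ) : Prop :=
  ∃ (R : Matrix (Fin n) (Fin m) ℕ) (S : Matrix (Fin m) (Fin n) ℕ), A = R * S ∧ B = S * R

/-- Strong shift equivalence: transitive closure of elementary shift relation,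
on the collection of all finite square matrices over `ℕ`. -/
def SSE (X Y : Σ n : ℕ, Matrix (Fin n) (Fin n) ℕ) : Prop :=
  Relation.TransGen (fun X Y => ElemSE X.2 Y.2) X Y

/-- Shift equivalence. -/
def ShiftEquiv {V W : Type*} [Fintype V] [Fintype W] [DecidableEq V] [DecidableEq W]
    (A : Matrix V V ℕ) (B : Matrix W W ℕ) : Prop :=
  ∃ m : ℕ, 1 ≤ m ∧ ∃ (R : Matrix V W ℕ) (S : Matrix W V ℕ),
    A ^ m = R * S ∧ B ^ m = S * R ∧ S * A = B * S ∧ A * R = R * B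

private lemma pow_intertwine {n m : ℕ} (A : Matrix (Fin n) (Fin n) ℕ)
    (B : Matrix (Fin m) (Fin m) ℕ) (R : Matrix (Fin n) (Fin m) ℕ)
    (h : A * R = R * B) : ∀ k : ℕ, A ^ k * R = R * B ^ k := by
  intro k
  induction k with
  | zero => simp
  | succ k ih =>
    rw [pow_succ, pow_succ, Matrix.mul_assoc, h, ← Matrix.mul_assoc, ih, Matrix.mul_assoc]

private lemma elem_se {n m : ℕ} {A : Matrix (Fin n) (Fin n) ℕ}
    {B : Matrix (Fin m) (Fin m) ℕ} (h : ElemSE A B) : ShiftEquiv A B := by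
  obtain ⟨R, S, hA, hB⟩ := h
  exact ⟨1, le_refl 1, R, S, by simpa using hA, by simpa using hB,
    by rw [hA, hB, Matrix.mul_assoc], by rw [hA, hB, Matrix.mul_assoc]⟩

private lemma se_trans {n k l : ℕ} {A : Matrix (Fin n) (Fin n) ℕ}
    {B : Matrix (Fin k) (Fin k) ℕ} {C : Matrix (Fin l) (Fin l) ℕ}
    (h1 : ShiftEquiv A B) (h2 : ShiftEquiv B C) : ShiftEquiv A C := by
  obtain ⟨p, hp, R, S, hRS, hSR, hSA, hAR⟩ := h1
  obtain ⟨q, hq, R', S', hRS', hSR', hSB, hBR⟩ := h2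
  refine ⟨p + q, le_trans hp (Nat.le_add_right _ _), R * R', S' * S, ?_, ?_, ?_, ?_⟩
  · have hAq : A ^ q * R = R * B ^ q := pow_intertwine A B R hAR q
    calc A ^ (p + q) = A ^ q * A ^ p := by rw [← pow_add, add_comm]
    _ = A ^ q * (R * S) := by rw [hRS]
    _ = (A ^ q * R) * S := by rw [Matrix.mul_assoc]
    _ = R * B ^ q * S := by rw [hAq]
    _ = R * (R' * S') * S := by rw [hRS']
    _ = R * R' * (S' * S) := by simp only [Matrix.mul_assoc]
  · have hCS : C ^ p * S' = S' * B ^ p := pow_intertwine C B S' hSB.symm p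
    calc C ^ (p + q) = C ^ p * C ^ q := by rw [pow_add]
    _ = C ^ p * (S' * R') := by rw [hSR']
    _ = (C ^ p * S') * R' := by rw [Matrix.mul_assoc]
    _ = S' * B ^ p * R' := by rw [hCS]
    _ = S' * (S * R) * R' := by rw [hSR]
    _ = S' * S * (R * R') := by simp only [Matrix.mul_assoc]
  · calc S' * S * A = S' * (S * A) := by rw [Matrix.mul_assoc]
    _ = S' * (B * S) := by rw [hSA]
    _ = (S' * B) * S := by rw [Matrix.mul_assoc]
    _ = (C * S') * S := by rw [hSB]
    _ = C * (S' * S) := by rw [Matrix.mul_assoc]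
  · calc A * (R * R') = (A * R) * R' := by rw [Matrix.mul_assoc]
    _ = (R * B) * R' := by rw [hAR]
    _ = R * (B * R') := by rw [Matrix.mul_assoc]
    _ = R * (R' * C) := by rw [hBR]
    _ = R * R' * C := by rw [Matrix.mul_assoc]

private lemma sse_aux : ∀ X Y : Σ n : ℕ, Matrix (Fin n) (Fin n) ℕ,
    SSE X Y → ShiftEquiv X.2 Y.2 := by
  intro X Y h
  induction h with
  | single h => exact elem_se h
  | tail _ h ih => exact se_trans ih (elem_se h)

/-- strong shift equivalence implies shift equivalence. -/
theorem sse_implies_se {n m : ℕ} (A : Matrix (Fin n) (Fin n) ℕ)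
    (B : Matrix (Fin m) (Fin m) ℕ) (h : SSE ⟨n, A⟩ ⟨m, B⟩) :
    ShiftEquiv A B :=
  sse_aux ⟨n, A⟩ ⟨m, B⟩ h
end

section
/- If A and B are compatibly shift equivalent with lag m via matrices R, S and path isomorphisms φ_R, φ_S, ψ_A, ψ_B, then the following commutation relations hold automatically: (ψ_A × id_A)∘(id_R × φ_S) = (id_A × ψ_A)∘(φ_R⁻¹ × id_S) and (ψ_B × id_B)∘(id_S × φ_R) = (id_B × ψ_B)∘(φ_S⁻¹ × id_R). -/
universe u

/-- The edge set of a matrix `F` over `ℕ`: `E_F = { (v,w,n) : n < F v w }`. -/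
def Edge {α β : Type u} (F : Matrix α β ℕ) : Type u :=
  {p : α × β × ℕ // p.2.2 < F p.1 p.2.1}

/-- Source of an edge. -/
def Edge.src {α β : Type u} {F : Matrix α β ℕ} (e : Edge F) : α := e.val.1

/-- Range of an edge. -/
def Edge.rng {α β : Type u} {F : Matrix α β ℕ} (e : Edge F) : β := e.val.2.1

/-- An abstract edge system: a set of "edges" with source and range maps. -/
structure EdgeSys (α β : Type u) : Type (u + 1) where
  E : Type u
  src : E → α
  rng : E → β

/-- The edge system of a matrix over `ℕ`. -/
def esys {α β : Type u} (F : Matrix α β ℕ) : EdgeSys α β :=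
  ⟨Edge F, Edge.src, Edge.rng⟩

/-- The product of edge systems: composable pairs of edges. -/
def EdgeSys.prod {α β γ : Type u} (X : EdgeSys α β) (Y : EdgeSys β γ) : EdgeSys α γ :=
  ⟨{p : X.E × Y.E // X.rng p.1 = Y.src p.2},
   fun p => X.src p.val.1, fun p => Y.rng p.val.2⟩

/-- Powers of an edge system: paths of a given length (`pow 0` = vertices). -/
def EdgeSys.pow {α : Type u} (X : EdgeSys α α) : ℕ → EdgeSys α α
  | 0 => ⟨α, id, id⟩
  | 1 => X
  | n + 2 => X.prod (X.pow (n + 1))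

/-- A path isomorphism between edge systems: a source- and range-preserving
bijection. -/
structure PIso {α β : Type u} (X Y : EdgeSys α β) : Type u where
  e : X.E ≃ Y.E
  src_eq : ∀ x, Y.src (e x) = X.src x
  rng_eq : ∀ x, Y.rng (e x) = X.rng x

/-- Identity path isomorphism. -/
def PIso.refl {α β : Type u} (X : EdgeSys α β) : PIso X X :=
  ⟨Equiv.refl _, fun _ => rfl, fun _ => rfl⟩

/-- Inverse of a path isomorphism. -/
def PIso.symm {α β : Type u} {X Y : EdgeSys α β} (f : PIso X Y) : PIso Y X :=
  ⟨f.e.symm,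
   fun y => by rw [← f.src_eq (f.e.symm y), Equiv.apply_symm_apply],
   fun y => by rw [← f.rng_eq (f.e.symm y), Equiv.apply_symm_apply]⟩

/-- Composition of path isomorphisms. -/
def PIso.trans {α β : Type u} {X Y Z : EdgeSys α β} (f : PIso X Y) (g : PIso Y Z) :
    PIso X Z :=
  ⟨f.e.trans g.e,
   fun x => by rw [Equiv.trans_apply, g.src_eq, f.src_eq],
   fun x => by rw [Equiv.trans_apply, g.rng_eq, f.rng_eq]⟩

/-- Horizontal product `f × g` of path isomorphisms. -/
def PIso.hprod {α β γ : Type u} {X X' : EdgeSys α β} {Y Y' : EdgeSys β γ}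
    (f : PIso X X') (g : PIso Y Y') : PIso (X.prod Y) (X'.prod Y') where
  e := Equiv.subtypeEquiv (f.e.prodCongr g.e) (by
        intro p
        simp only [Equiv.prodCongr_apply, Prod.map]
        rw [f.rng_eq, g.src_eq])
  src_eq := fun x => f.src_eq x.val.1
  rng_eq := fun x => g.rng_eq x.val.2

/-- The associator path isomorphism `(X × Y) × Z ≅ X × (Y × Z)`. -/
def EdgeSys.assoc {α β γ δ : Type u} (X : EdgeSys α β) (Y : EdgeSys β γ)
    (Z : EdgeSys γ δ) : PIso ((X.prod Y).prod Z) (X.prod (Y.prod Z)) where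
  e := { toFun := fun p =>
            ⟨(p.val.1.val.1, ⟨(p.val.1.val.2, p.val.2), p.property⟩), p.val.1.property⟩
         invFun := fun q =>
            ⟨(⟨(q.val.1, q.val.2.val.1), q.property⟩, q.val.2.val.2), q.val.2.property⟩
         left_inv := fun p => rfl
         right_inv := fun q => rfl }
  src_eq := fun _ => rfl
  rng_eq := fun _ => rfl

/-- The iterated path isomorphism `φ^(m)` (with `m = k + 1`), moving an edge of
`R` past `m` edges: `φ^(m) = (φ × id) ∘ (id × φ × id) ∘ ⋯ ∘ (id × φ)`. -/
def PIso.iter {α β : Type u} {X : EdgeSys α α} {Y : EdgeSys β β} {R : EdgeSys α β}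
    (φ : PIso (X.prod R) (R.prod Y)) :
    (k : ℕ) → PIso ((X.pow (k + 1)).prod R) (R.prod (Y.pow (k + 1)))
  | 0 => φ
  | k + 1 =>
      (EdgeSys.assoc X (X.pow (k + 1)) R).trans
        (((PIso.refl X).hprod (φ.iter k)).trans
          ((EdgeSys.assoc X R (Y.pow (k + 1))).symm.trans
            ((φ.hprod (PIso.refl (Y.pow (k + 1)))).trans
              (EdgeSys.assoc R Y (Y.pow (k + 1))))))

/-- The canonical path isomorphism `X^(k+1) × X ≅ X^(k+2)`. -/
def EdgeSys.powShift {α : Type u} (X : EdgeSys α α) :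
    (k : ℕ) → PIso ((X.pow (k + 1)).prod X) (X.pow (k + 2))
  | 0 => PIso.refl (X.prod X)
  | k + 1 =>
      (EdgeSys.assoc X (X.pow (k + 1)) X).trans
        ((PIso.refl X).hprod (X.powShift k))

/-- A compatible shift equivalence of lag `k + 1` between `A` and `B`, via the
matrices `R` and `S`: path isomorphisms `φ_R, φ_S, ψ_A, ψ_B` satisfying
`φ_R^(m) = (id_R × ψ_B) ∘ (ψ_A⁻¹ × id_R)` and
`φ_S^(m) = (id_S × ψ_A) ∘ (ψ_B⁻¹ × id_S)` (with `m = k + 1`). -/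
structure CompatSE {V W : Type u} (A : Matrix V V ℕ) (B : Matrix W W ℕ)
    (R : Matrix V W ℕ) (S : Matrix W V ℕ) (k : ℕ) : Type u where
  φR : PIso ((esys A).prod (esys R)) ((esys R).prod (esys B))
  φS : PIso ((esys B).prod (esys S)) ((esys S).prod (esys A))
  ψA : PIso ((esys R).prod (esys S)) ((esys A).pow (k + 1))
  ψB : PIso ((esys S).prod (esys R)) ((esys B).pow (k + 1))
  compatR : φR.iter k =
    (ψA.symm.hprod (PIso.refl (esys R))).trans
      ((EdgeSys.assoc (esys R) (esys S) (esys R)).trans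
        ((PIso.refl (esys R)).hprod ψB))
  compatS : φS.iter k =
    (ψB.symm.hprod (PIso.refl (esys S))).trans
      ((EdgeSys.assoc (esys S) (esys R) (esys S)).trans
        ((PIso.refl (esys S)).hprod ψA))

/-- A matrix is essential if it has no zero rows and no zero columns. -/
def Essential {V W : Type u} (M : Matrix V W ℕ) : Prop :=
  (∀ v, ∃ w, M v w ≠ 0) ∧ (∀ w, ∃ v, M v w ≠ 0)

/-!
Apply both sides of the first relation to `(r, b, s)`: the left side gives `J = ψ_A(r, s')·a`
with `(s', a) = φ_S(b, s)`, the right side `a'·ψ_A(r', s)` with `(a', r') = φ_R⁻¹(r, b)`.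
Split `J` the other way as `J = a₀·ψ_A(ρ₀, σ₀)`. Evaluating `φ_R^(m+1)(J, r'')` from either
end, compatibility gives `φ_R(a₀, ρ₀) = (r, e₀)` and `e₀·ψ_B(σ₀, r'') = ψ_B(s', r̂)·b̂`, where
`φ_R(a, r'') = (r̂, b̂)`. Evaluating `φ_S^(m+1)` on this path of `B`, followed by an edge `s''`,
gives in the same way `φ_S(e₀, σ₀) = (s', first edge of ψ_A(r̂, ŝ))`, where
`φ_S(b̂, s'') = (ŝ, â)`.
Since `A` and `B` have no sinks, `r''` and `s''` can be chosen so that `ψ_A(r̂, ŝ)` is any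
prescribed path starting with `a`: the first step of `φ_R^(m)(ψ_A(r̂, ŝ), ρ) = (r̂, ψ_B(ŝ, ρ))`
provides `r''`, and likewise for `s''`. Then `φ_S(e₀, σ₀) = (s', a) = φ_S(b, s)` gives
`(e₀, σ₀) = (b, s)`, hence `φ_R(a₀, ρ₀) = (r, b)` and `(a₀, ρ₀) = (a', r')`. The second relation
is the first with the roles of `A` and `B` exchanged.
-/

@[ext]
theorem PIso.ext {α β : Type u} {X Y : EdgeSys α β} {f g : PIso X Y} (h : ∀ x, f.e x = g.e x) :
    f = g := by
  cases f; cases g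
  congr
  exact Equiv.ext h

theorem PIso.surjective_src {α β : Type u} {X Y : EdgeSys α β} (f : PIso X Y)
    (h : Function.Surjective Y.src) : Function.Surjective X.src := by
  have : X.src = Y.src ∘ f.e := funext fun x => (f.src_eq x).symm
  exact this ▸ h.comp f.e.surjective

theorem EdgeSys.surjective_src_of_prod {α β γ : Type u} {X : EdgeSys α β} {Y : EdgeSys β γ}
    (h : Function.Surjective (X.prod Y).src) : Function.Surjective X.src :=
  Function.Surjective.of_comp (g := fun p : (X.prod Y).E => p.val.1) h

namespace EdgeSys

variable {α : Type u} {X : EdgeSys α α}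

def head : {k : ℕ} → (X.pow (k + 1)).E → X.E
  | 0, p => p
  | _ + 1, p => p.val.1

def snoc {k : ℕ} (p : (X.pow (k + 1)).E) (x : X.E) (h : (X.pow (k + 1)).rng p = X.src x) :
    (X.pow (k + 2)).E :=
  (X.powShift k).e ⟨(p, x), h⟩

theorem head_snoc {k : ℕ} (p : (X.pow (k + 1)).E) (x : X.E) (h) : (snoc p x h).val.1 = head p := by
  cases k <;> rfl

theorem rng_snoc {k : ℕ} (p : (X.pow (k + 1)).E) (x : X.E) (h) :
    (X.pow (k + 2)).rng (snoc p x h) = X.rng x :=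
  (X.powShift k).rng_eq _

theorem surjective_src_pow (hX : Function.Surjective X.src) :
    ∀ n, Function.Surjective (X.pow (n + 1)).src
  | 0 => hX
  | n + 1 => fun v => by
    obtain ⟨x, rfl⟩ := hX v
    obtain ⟨p, hp⟩ := surjective_src_pow hX n (X.rng x)
    exact ⟨⟨(x, p), hp.symm⟩, rfl⟩

theorem surjective_head (hX : Function.Surjective X.src) :
    ∀ k, Function.Surjective (head : (X.pow (k + 1)).E → X.E)
  | 0 => fun x => ⟨x, rfl⟩
  | k + 1 => fun x => by
    obtain ⟨p, hp⟩ := surjective_src_pow hX k (X.rng x)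
    exact ⟨⟨(x, p), hp.symm⟩, rfl⟩

end EdgeSys

namespace PIso
open EdgeSys
variable {α β : Type u} {X : EdgeSys α α} {Y : EdgeSys β β} {R : EdgeSys α β}

theorem iter_succ_apply_snoc (φ : PIso (X.prod R) (R.prod Y)) {k : ℕ} (p : (X.pow (k + 1)).E)
    (a : X.E) (r : R.E) (hpa) (har : X.rng a = R.src r) (h)
    (hpΦ : (X.pow (k + 1)).rng p = R.src (φ.e ⟨(a, r), har⟩).val.1) (hTΦ) :
    ((φ.iter (k + 1)).e ⟨(snoc p a hpa, r), h⟩).val =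
      (((φ.iter k).e ⟨(p, (φ.e ⟨(a, r), har⟩).val.1), hpΦ⟩).val.1,
        snoc ((φ.iter k).e ⟨(p, (φ.e ⟨(a, r), har⟩).val.1), hpΦ⟩).val.2
          (φ.e ⟨(a, r), har⟩).val.2 hTΦ) := by
  induction k with
  | zero => rfl
  | succ k ih =>
    obtain ⟨⟨x, p⟩, hxp⟩ := p
    have ih' := ih p hpa ((rng_snoc _ _ _).trans har) hpΦ
      (((φ.iter k).rng_eq _).trans (φ.e ⟨(a, r), har⟩).property)
    set T := (φ.iter (k + 1)).e ⟨(snoc p a hpa, r), (rng_snoc _ _ _).trans har⟩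
    show (((φ.e ⟨(x, T.val.1), _⟩).val.1, ⟨((φ.e ⟨(x, T.val.1), _⟩).val.2, T.val.2), _⟩) :
      R.E × (Y.pow (k + 3)).E) = _
    simp only [T, ih']
    rfl

end PIso

section Compatible
open EdgeSys
variable {α β : Type u} {X : EdgeSys α α} {Y : EdgeSys β β} {R : EdgeSys α β} {S : EdgeSys β α}
  {k : ℕ}

def PIso.IsCompatible (φ : PIso (X.prod R) (R.prod Y)) (ψ : PIso (R.prod S) (X.pow (k + 1)))
    (ψ' : PIso (S.prod R) (Y.pow (k + 1))) : Prop :=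
  φ.iter k = (ψ.symm.hprod (PIso.refl R)).trans
    ((EdgeSys.assoc R S R).trans ((PIso.refl R).hprod ψ'))

namespace PIso.IsCompatible
variable {φ : PIso (X.prod R) (R.prod Y)} {ψ : PIso (R.prod S) (X.pow (k + 1))}
  {ψ' : PIso (S.prod R) (Y.pow (k + 1))}

theorem iter_apply (hc : IsCompatible φ ψ ψ') (q : (R.prod S).E) (r : R.E) (h)
    (h' : S.rng q.val.2 = R.src r) :
    ((φ.iter k).e ⟨(ψ.e q, r), h⟩).val = (q.val.1, ψ'.e ⟨(q.val.2, r), h'⟩) := by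
  rw [hc]
  show ((ψ.e.symm (ψ.e q)).val.1, ψ'.e ⟨((ψ.e.symm (ψ.e q)).val.2, r), _⟩) = _
  simp

theorem iter_succ_apply_snoc (hc : IsCompatible φ ψ ψ') (q : (R.prod S).E) (a : X.E) (r : R.E)
    (hqa) (har : X.rng a = R.src r) (h) (h') (h'') :
    ((φ.iter (k + 1)).e ⟨(snoc (ψ.e q) a hqa, r), h⟩).val =
      (q.val.1, snoc (ψ'.e ⟨(q.val.2, (φ.e ⟨(a, r), har⟩).val.1), h'⟩)
        (φ.e ⟨(a, r), har⟩).val.2 h'') := by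
  rw [φ.iter_succ_apply_snoc _ _ _ _ _ _ (hqa.trans (φ.src_eq ⟨(a, r), har⟩).symm)
    (((φ.iter k).rng_eq _).trans (φ.e ⟨(a, r), har⟩).property)]
  simp [hc.iter_apply q _ _ h']

theorem iter_succ_apply_of_tail_eq (hc : IsCompatible φ ψ ψ') (J : (X.pow (k + 2)).E)
    (q : (R.prod S).E) (hq : ψ.e q = J.val.2) (r : R.E) (h) (h') (h'') (h''') :
    ((φ.iter (k + 1)).e ⟨(J, r), h⟩).val =
      ((φ.e ⟨(J.val.1, q.val.1), h'⟩).val.1,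
        ⟨((φ.e ⟨(J.val.1, q.val.1), h'⟩).val.2, ψ'.e ⟨(q.val.2, r), h''⟩), h'''⟩) := by
  obtain ⟨⟨a, p⟩, hap⟩ := J
  subst hq
  show (((φ.e ⟨(a, ((φ.iter k).e ⟨(ψ.e q, r), h⟩).val.1), _⟩).val.1,
    ⟨((φ.e ⟨(a, ((φ.iter k).e ⟨(ψ.e q, r), h⟩).val.1), _⟩).val.2,
      ((φ.iter k).e ⟨(ψ.e q, r), h⟩).val.2), _⟩) : R.E × (Y.pow (k + 2)).E) = _
  simp [hc.iter_apply q r h h'']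

theorem exists_apply_head (hc : IsCompatible φ ψ ψ') (q : (R.prod S).E) (ρ : R.E)
    (h : S.rng q.val.2 = R.src ρ) :
    ∃ (x : R.E) (hx : X.rng (head (ψ.e q)) = R.src x),
      (φ.e ⟨(head (ψ.e q), x), hx⟩).val = (q.val.1, head (ψ'.e ⟨(q.val.2, ρ), h⟩)) := by
  have hρ := hc.iter_apply q ρ ((ψ.rng_eq q).trans h) h
  cases k with
  | zero => exact ⟨ρ, _, hρ⟩
  | succ k =>
    obtain ⟨e₁, e₂⟩ := Prod.ext_iff.1 hρ
    exact ⟨_, (ψ.e q).property.trans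
      ((φ.iter k).src_eq ⟨((ψ.e q).val.2, ρ), (ψ.rng_eq q).trans h⟩).symm,
      Prod.ext e₁ (congrArg (fun z => z.val.1) e₂)⟩

theorem apply_eq_of_snoc (hc : IsCompatible φ ψ ψ') {q : (R.prod S).E} {a : X.E} {hqa}
    {q₀ : (R.prod S).E} (hq₀ : ψ.e q₀ = (snoc (ψ.e q) a hqa).val.2) {r : R.E}
    (har : X.rng a = R.src r) :
    ∃ h h' h₀ h₀', (φ.e ⟨((snoc (ψ.e q) a hqa).val.1, q₀.val.1), h₀⟩).val =
        (q.val.1, (snoc (ψ'.e ⟨(q.val.2, (φ.e ⟨(a, r), har⟩).val.1), h⟩)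
          (φ.e ⟨(a, r), har⟩).val.2 h').val.1) ∧
      ψ'.e ⟨(q₀.val.2, r), h₀'⟩ = (snoc (ψ'.e ⟨(q.val.2, (φ.e ⟨(a, r), har⟩).val.1), h⟩)
          (φ.e ⟨(a, r), har⟩).val.2 h').val.2 := by
  have h := (ψ.rng_eq q).symm.trans (hqa.trans (φ.src_eq ⟨(a, r), har⟩).symm)
  have h' := (ψ'.rng_eq ⟨(q.val.2, (φ.e ⟨(a, r), har⟩).val.1), h⟩).trans
    (φ.e ⟨(a, r), har⟩).property
  have h₀ := (snoc (ψ.e q) a hqa).property.trans ((congrArg _ hq₀).symm.trans (ψ.src_eq q₀))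
  have h₀' := (ψ.rng_eq q₀).symm.trans ((congrArg _ hq₀).trans ((rng_snoc _ _ _).trans har))
  have e := (hc.iter_succ_apply_of_tail_eq _ q₀ hq₀ r ((rng_snoc _ _ _).trans har) h₀ h₀'
    ((φ.rng_eq _).trans (q₀.property.trans (ψ'.src_eq ⟨(q₀.val.2, r), h₀'⟩).symm))).symm.trans
    (hc.iter_succ_apply_snoc q a r hqa har _ h h')
  obtain ⟨e₁, e₂⟩ := Prod.ext_iff.1 e
  exact ⟨h, h', h₀, h₀', Prod.ext e₁ (congrArg (fun z => z.val.1) e₂),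
    congrArg (fun z => z.val.2) e₂⟩

end PIso.IsCompatible
end Compatible

section Relations
open EdgeSys PIso
variable {α β : Type u} {X : EdgeSys α α} {Y : EdgeSys β β} {R : EdgeSys α β} {S : EdgeSys β α}
  {k : ℕ} {φR : PIso (X.prod R) (R.prod Y)} {φS : PIso (Y.prod S) (S.prod X)}
  {ψA : PIso (R.prod S) (X.pow (k + 1))} {ψB : PIso (S.prod R) (Y.pow (k + 1))}

theorem snoc_eq_of_isCompatible (hX : Function.Surjective X.src) (hY : Function.Surjective Y.src)
    (hcR : IsCompatible φR ψA ψB) (hcS : IsCompatible φS ψB ψA)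
    {r : R.E} {s' : S.E} {a : X.E} (h₁ : R.rng r = S.src s') (h₂)
    {b : Y.E} {s : S.E} (hbs : Y.rng b = S.src s) (hS : (φS.e ⟨(b, s), hbs⟩).val = (s', a))
    {a' : X.E} {r' : R.E} (har' : X.rng a' = R.src r') (hR : (φR.e ⟨(a', r'), har'⟩).val = (r, b))
    (h₃) (h₄) :
    snoc (ψA.e ⟨(r, s'), h₁⟩) a h₂ = ⟨(a', ψA.e ⟨(r', s), h₃⟩), h₄⟩ := by
  have hRsrc : Function.Surjective R.src :=
    surjective_src_of_prod (ψA.surjective_src (surjective_src_pow hX k))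
  have hSsrc : Function.Surjective S.src :=
    surjective_src_of_prod (ψB.surjective_src (surjective_src_pow hY k))
  obtain ⟨p, rfl⟩ := surjective_head hX k a
  obtain ⟨⟨⟨r₁, s₁⟩, hrs₁⟩, rfl⟩ := ψA.e.surjective p
  obtain ⟨ρ, hρ⟩ := hRsrc (S.rng s₁)
  obtain ⟨r'', har'', hΦ⟩ := hcR.exists_apply_head ⟨(r₁, s₁), hrs₁⟩ ρ hρ.symm
  obtain ⟨σ, hσ⟩ := hSsrc (R.rng ρ)
  obtain ⟨s'', hbs'', hΦ'⟩ := hcS.exists_apply_head ⟨(s₁, ρ), hρ.symm⟩ σ hσ.symm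
  obtain ⟨⟨⟨ρ₀, σ₀⟩, h₀⟩, hq₀⟩ := ψA.e.surjective (snoc (ψA.e ⟨(r, s'), h₁⟩) _ h₂).val.2
  obtain ⟨_, _, _, _, e₁, e₂⟩ := hcR.apply_eq_of_snoc hq₀ har''
  simp only [hΦ] at e₁ e₂
  obtain ⟨_, _, _, _, f₁, -⟩ := hcS.apply_eq_of_snoc e₂ hbs''
  simp only [hΦ', head_snoc] at f₁
  obtain ⟨hb, rfl⟩ : head (ψB.e _) = b ∧ σ₀ = s := Prod.ext_iff.1
    (congrArg Subtype.val (φS.e.injective (Subtype.ext (f₁.trans hS.symm))))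
  simp only [head_snoc, hb, ← hR] at e₁
  obtain ⟨rfl, rfl⟩ : head (ψA.e ⟨(r, s'), h₁⟩) = a' ∧ ρ₀ = r' :=
    Prod.ext_iff.1 (congrArg Subtype.val (φR.e.injective (Subtype.ext e₁)))
  exact Subtype.ext (Prod.ext (head_snoc _ _ _) hq₀.symm)

theorem relation_of_isCompatible (hX : Function.Surjective X.src)
    (hY : Function.Surjective Y.src) (hcR : IsCompatible φR ψA ψB) (hcS : IsCompatible φS ψB ψA) :
    ((PIso.refl R).hprod φS).trans ((EdgeSys.assoc R S X).symm.trans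
        ((ψA.hprod (PIso.refl X)).trans (X.powShift k))) =
      (EdgeSys.assoc R Y S).symm.trans ((φR.symm.hprod (PIso.refl S)).trans
        ((EdgeSys.assoc X R S).trans ((PIso.refl X).hprod ψA))) := by
  ext ⟨⟨r, ⟨⟨b, s⟩, hbs⟩⟩, h⟩
  exact snoc_eq_of_isCompatible hX hY hcR hcS _ _ hbs rfl _
    (congrArg Subtype.val (φR.e.apply_symm_apply ⟨(r, b), h⟩)) _ _

end Relations

theorem Essential.surjective_src {V : Type u} {A : Matrix V V ℕ} (hA : Essential A) :
    Function.Surjective (esys A).src := fun v => by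
  obtain ⟨w, hw⟩ := hA.1 v
  exact ⟨⟨(v, w, 0), Nat.pos_of_ne_zero hw⟩, rfl⟩

/-- for essential matrices `A`, `B`, in any compatible shift
equivalence the relations
`(ψ_A × id_A) ∘ (id_R × φ_S) = (id_A × ψ_A) ∘ (φ_R⁻¹ × id_S)` and
`(ψ_B × id_B) ∘ (id_S × φ_R) = (id_B × ψ_B) ∘ (φ_S⁻¹ × id_R)`
hold automatically (with the canonical identification `A^m × A ≅ A^{m+1}`). -/
theorem compatSE_auto_relations {V W : Type}
    (A : Matrix V V ℕ) (B : Matrix W W ℕ)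
    (R : Matrix V W ℕ) (S : Matrix W V ℕ) (k : ℕ)
    (hA : Essential A) (hB : Essential B)
    (c : CompatSE A B R S k) :
    (((PIso.refl (esys R)).hprod c.φS).trans
        ((EdgeSys.assoc (esys R) (esys S) (esys A)).symm.trans
          ((c.ψA.hprod (PIso.refl (esys A))).trans ((esys A).powShift k))) =
      (EdgeSys.assoc (esys R) (esys B) (esys S)).symm.trans
        ((c.φR.symm.hprod (PIso.refl (esys S))).trans
          ((EdgeSys.assoc (esys A) (esys R) (esys S)).trans
            ((PIso.refl (esys A)).hprod c.ψA)))) ∧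
    (((PIso.refl (esys S)).hprod c.φR).trans
        ((EdgeSys.assoc (esys S) (esys R) (esys B)).symm.trans
          ((c.ψB.hprod (PIso.refl (esys B))).trans ((esys B).powShift k))) =
      (EdgeSys.assoc (esys S) (esys A) (esys R)).symm.trans
        ((c.φS.symm.hprod (PIso.refl (esys R))).trans
          ((EdgeSys.assoc (esys B) (esys S) (esys R)).trans
            ((PIso.refl (esys B)).hprod c.ψB)))) :=
  ⟨relation_of_isCompatible hA.surjective_src hB.surjective_src c.compatR c.compatS,
    relation_of_isCompatible hB.surjective_src hA.surjective_src c.compatS c.compatR⟩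
end

section
/- In the setting of a representable shift equivalence where A and B have no zero columns, the vertex projections of the two Cuntz-Krieger families necessarily agree: if (S_v, S_c) is a Cuntz-Krieger family for G_C and (T_w, T_d) is a Cuntz-Krieger family for G_D on the same Hilbert space satisfying T_{d₁d₂} = S_{c₁⋯c_m} whenever ψ(d₁d₂) = c₁⋯c_m, then S_v = T_v for every vertex v ∈ V ⊔ W. -/
universe u

/-- The edge set of a matrix over a finite index set is finite. -/
noncomputable instance {U : Type u} [Fintype U] (M : Matrix U U ℕ) : Fintype (Edge M) :=
  @Fintype.ofEquiv _ (Σ u : U, Σ u' : U, Fin (M u u'))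
    (@Sigma.instFintype _ _ (fun u => @Sigma.instFintype _ _ (fun u' => Fin.fintype (M u u')) _) _)
    { toFun := fun x => ⟨(x.1, x.2.1, x.2.2.val), x.2.2.isLt⟩
      invFun := fun e => ⟨e.val.1, e.val.2.1, ⟨e.val.2.2, e.property⟩⟩
      left_inv := fun _ => rfl
      right_inv := fun _ => rfl }

/-- A Cuntz–Krieger family for the directed graph of a matrix `M` over `ℕ`,
acting on a Hilbert space `H`: pairwise orthogonal projections `P u` and
operators `T e` with `T e* T e = P (r e)` and, for every vertex `u` emitting at
least one (and finitely many) edges, `Σ_{s(e) = u} T e T e* = P u`. -/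
structure CKFam {U : Type} [Fintype U] [DecidableEq U] (M : Matrix U U ℕ)
    (H : Type) [NormedAddCommGroup H] [InnerProductSpace ℂ H] [CompleteSpace H] :
    Type where
  P : U → H →L[ℂ] H
  T : Edge M → H →L[ℂ] H
  proj : ∀ u, P u * P u = P u
  selfadj : ∀ u, star (P u) = P u
  orth : ∀ u u', u ≠ u' → P u * P u' = 0
  ck1 : ∀ e, star (T e) * T e = P (Edge.rng e)
  ck2 : ∀ u, 0 < ∑ u', M u u' →
    ∑ e ∈ Finset.univ.filter (fun e : Edge M => Edge.src e = u),
      T e * star (T e) = P u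

/-- The operator associated to a path (a product of edge operators). -/
noncomputable def pathOp {U : Type} {M : Matrix U U ℕ} {H : Type}
    [NormedAddCommGroup H] [InnerProductSpace ℂ H] [CompleteSpace H]
    (T : Edge M → H →L[ℂ] H) : (m : ℕ) → ((esys M).pow m).E → (H →L[ℂ] H)
  | 0, _ => 1
  | 1, e => T e
  | n + 2, p => T p.val.1 * pathOp T (n + 1) p.val.2

/-!
Every column of `A` and `B` is nonzero, so every vertex `v` of `G_C` is the range of a path `μ`
of length `m`, and then also of the path `d = ψ⁻¹ μ` of length two in `G_D`. In any Cuntz–Krieger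
family a path operator satisfies `S_μ* S_μ = S_{r(μ)}`, so
`S_v = S_μ* S_μ = T_d* T_d = T_v`. The path identity rests on `S_{s(e)} S_e = S_e`, which holds
in any C*-algebra because the second Cuntz–Krieger relation gives `S_e S_e* ≤ S_{s(e)}`.
-/

theorem mul_eq_self_of_isIdempotentElem_of_mul_star_le {A : Type*} [NormedRing A] [StarRing A]
    [CStarRing A] [PartialOrder A] [StarOrderedRing A] {p t : A} (hp : IsIdempotentElem p)
    (ht : t * star t ≤ p) : p * t = t := by
  have hqp : (1 - p) * p * star (1 - p) = 0 := by
    rw [sub_mul, one_mul, hp.eq, sub_self, zero_mul]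
  have hle : (1 - p) * t * star ((1 - p) * t) ≤ 0 := by
    rw [star_mul, ← mul_assoc, mul_assoc (1 - p), ← hqp]
    exact star_right_conjugate_le_conjugate ht (1 - p)
  have hzero : (1 - p) * t = 0 :=
    (CStarRing.mul_star_self_eq_zero_iff _).mp (le_antisymm hle (mul_star_self_nonneg _))
  rw [sub_mul, one_mul, sub_eq_zero] at hzero
  exact hzero.symm

theorem exists_edge_rng_of_col_ne_zero {α β : Type u} {M : Matrix α β ℕ}
    (hM : ∀ j, ∃ i, M i j ≠ 0) (j : β) : ∃ e : Edge M, Edge.rng e = j := by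
  obtain ⟨i, hi⟩ := hM j
  exact ⟨⟨(i, j, 0), Nat.pos_of_ne_zero hi⟩, rfl⟩

theorem Matrix.fromBlocks_col_ne_zero {ι κ : Type*} {A : Matrix ι ι ℕ} {D : Matrix κ κ ℕ}
    (hA : ∀ j, ∃ i, A i j ≠ 0) (hD : ∀ j, ∃ i, D i j ≠ 0) :
    ∀ j, ∃ i, Matrix.fromBlocks A 0 0 D i j ≠ 0
  | Sum.inl j => by obtain ⟨i, hi⟩ := hA j; exact ⟨Sum.inl i, hi⟩
  | Sum.inr j => by obtain ⟨i, hi⟩ := hD j; exact ⟨Sum.inr i, hi⟩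

theorem EdgeSys.exists_pow_rng {α : Type u} {X : EdgeSys α α} (hX : ∀ a, ∃ e, X.rng e = a) :
    ∀ n a, ∃ p : (X.pow n).E, (X.pow n).rng p = a
  | 0, a => ⟨a, rfl⟩
  | 1, a => hX a
  | n + 2, a => by
    obtain ⟨q, hq⟩ := exists_pow_rng hX (n + 1) a
    obtain ⟨e, he⟩ := hX ((X.pow (n + 1)).src q)
    exact ⟨⟨(e, q), he⟩, hq⟩

namespace CKFam

variable {U : Type} [Fintype U] [DecidableEq U] {M : Matrix U U ℕ}
  {H : Type} [NormedAddCommGroup H] [InnerProductSpace ℂ H] [CompleteSpace H]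
  (F : CKFam M H)

theorem T_mul_star_le_P_src (e : Edge M) : F.T e * star (F.T e) ≤ F.P (Edge.src e) := by
  have hemits : 0 < ∑ u', M (Edge.src e) u' :=
    (Nat.zero_lt_of_lt e.property).trans_le
      (Finset.single_le_sum (fun _ _ => Nat.zero_le _) (Finset.mem_univ (Edge.rng e)))
  rw [← F.ck2 _ hemits]
  exact Finset.single_le_sum (fun f _ => mul_star_self_nonneg (F.T f))
    (Finset.mem_filter.mpr ⟨Finset.mem_univ e, rfl⟩)

theorem P_src_mul_T (e : Edge M) : F.P (Edge.src e) * F.T e = F.T e :=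
  mul_eq_self_of_isIdempotentElem_of_mul_star_le (F.proj _) (F.T_mul_star_le_P_src e)

theorem P_src_mul_pathOp :
    ∀ n (p : ((esys M).pow (n + 1)).E),
      F.P (((esys M).pow (n + 1)).src p) * pathOp F.T (n + 1) p = pathOp F.T (n + 1) p
  | 0, e => F.P_src_mul_T e
  | n + 1, p => by
    change F.P (Edge.src p.val.1) * (F.T p.val.1 * pathOp F.T (n + 1) p.val.2) = _
    rw [← mul_assoc, F.P_src_mul_T p.val.1]
    rfl

theorem star_pathOp_mul_pathOp :
    ∀ n (p : ((esys M).pow (n + 1)).E),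
      star (pathOp F.T (n + 1) p) * pathOp F.T (n + 1) p = F.P (((esys M).pow (n + 1)).rng p)
  | 0, e => F.ck1 e
  | n + 1, p => by
    have hp : Edge.rng p.val.1 = ((esys M).pow (n + 1)).src p.val.2 := p.property
    change star (F.T p.val.1 * pathOp F.T (n + 1) p.val.2)
        * (F.T p.val.1 * pathOp F.T (n + 1) p.val.2)
      = F.P (((esys M).pow (n + 1)).rng p.val.2)
    rw [star_mul, mul_assoc, ← mul_assoc (star (F.T p.val.1)), F.ck1 p.val.1, hp,
      F.P_src_mul_pathOp n p.val.2, star_pathOp_mul_pathOp n p.val.2]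

end CKFam

/-- in a representable shift equivalence with `A` and `B` having
no zero columns, the vertex projections of the two Cuntz–Krieger families
agree: if `(S_v, S_c)` is a Cuntz–Krieger family for `G_C` and `(T_w, T_d)` one
for `G_D` on the same Hilbert space, satisfying `T_{d₁d₂} = S_{c₁⋯c_m}`
whenever `ψ(d₁d₂) = c₁⋯c_m`, then `S_v = T_v` for every vertex `v ∈ V ⊔ W`. -/
theorem representable_vertex_projections_agree
    {V W : Type} [Fintype V] [Fintype W] [DecidableEq V] [DecidableEq W]
    {H : Type} [NormedAddCommGroup H] [InnerProductSpace ℂ H] [CompleteSpace H]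
    (A : Matrix V V ℕ) (B : Matrix W W ℕ)
    (R : Matrix V W ℕ) (S : Matrix W V ℕ)
    (hA : ∀ w, ∃ v, A v w ≠ 0) (hB : ∀ w, ∃ v, B v w ≠ 0)
    (m : ℕ) (hm : 0 < m)
    (ψ : PIso ((esys (Matrix.fromBlocks 0 R S 0)).pow 2)
          ((esys (Matrix.fromBlocks A 0 0 B)).pow m))
    (SF : CKFam (Matrix.fromBlocks A 0 0 B) H)
    (TF : CKFam (Matrix.fromBlocks 0 R S 0) H)
    (hint : ∀ p, pathOp TF.T 2 p = pathOp SF.T m (ψ.e p)) :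
    ∀ u, SF.P u = TF.P u := by
  intro u
  obtain ⟨k, rfl⟩ := Nat.exists_eq_add_one_of_ne_zero hm.ne'
  obtain ⟨μ, hμ⟩ := EdgeSys.exists_pow_rng (X := esys _)
    (exists_edge_rng_of_col_ne_zero (Matrix.fromBlocks_col_ne_zero hA hB)) (k + 1) u
  set d := ψ.e.symm μ
  have hψd : ψ.e d = μ := ψ.e.apply_symm_apply μ
  have hd : ((esys (Matrix.fromBlocks 0 R S 0)).pow 2).rng d = u := by
    rw [← ψ.rng_eq, hψd, hμ]
  calc SF.P u = star (pathOp SF.T (k + 1) μ) * pathOp SF.T (k + 1) μ := by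
        rw [SF.star_pathOp_mul_pathOp, hμ]
    _ = star (pathOp TF.T 2 d) * pathOp TF.T 2 d := by rw [hint, hψd]
    _ = TF.P u := by rw [TF.star_pathOp_mul_pathOp 1, hd]
end
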